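/- arXiv:math/0603452 — 7 statements merged into one kernel-verified Lean document; each statement's English description precedes it below -/
import Mathlib

section
/- For any nonconstant complex polynomial f of degree n and any finite set K ⊆ ℂ, the preimage f⁻¹(K) is finite and has cardinality at least n·(card K − 1) + 1. -/
open Polynomial Finset

theorem stmt_1 (f : Polynomial ℂ) (hf : 1 ≤ f.natDegree) (K : Finset ℂ)
    (hK : K.Nonempty) :
    {z : ℂ | f.eval z ∈ K}.Finite ∧
      f.natDegree * (K.card - 1) + 1 ≤ {z : ℂ | f.eval z ∈ K}.ncard := by
  set n := f.natDegree with hn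
  set g : ℂ → Polynomial ℂ := fun c => f - C c with hg
  have hgdeg : ∀ c, (g c).natDegree = n := fun c => natDegree_sub_C
  have hgne : ∀ c, g c ≠ 0 := by
    intro c h
    rw [← hgdeg c, h, natDegree_zero] at hf; omega
  set T : Finset ℂ := K.biUnion (fun c => (g c).roots.toFinset) with hT
  have hmemT : ∀ z : ℂ, z ∈ T ↔ f.eval z ∈ K := by
    intro z
    simp only [hT, Finset.mem_biUnion, Multiset.mem_toFinset]
    constructor
    · rintro ⟨c, hc, hz⟩
      rw [mem_roots (hgne c)] at hz
      have : f.eval z = c := by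
        simp [hg, IsRoot, sub_eq_zero] at hz
        exact hz
      rwa [this]
    · intro h
      exact ⟨f.eval z, h, (mem_roots (hgne _)).2 (by simp [hg, IsRoot])⟩
  have hset : {z : ℂ | f.eval z ∈ K} = ↑T := by
    ext z; simp [hmemT]
  have hfin : {z : ℂ | f.eval z ∈ K}.Finite := hset ▸ T.finite_toSet
  refine ⟨hfin, ?_⟩
  rw [hset, Set.ncard_coe_finset]
  -- disjointness
  have hdisj : ∀ c1 ∈ K, ∀ c2 ∈ K, c1 ≠ c2 →
      Disjoint ((g c1).roots.toFinset) ((g c2).roots.toFinset) := by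
    intro c1 _ c2 _ hne
    rw [Finset.disjoint_left]
    intro z h1 h2
    rw [Multiset.mem_toFinset, mem_roots (hgne _)] at h1 h2
    apply hne
    simp [hg, IsRoot, sub_eq_zero] at h1 h2
    rw [← h1, ← h2]
  have hcard : T.card = ∑ c ∈ K, (g c).roots.toFinset.card :=
    Finset.card_biUnion hdisj
  -- per-c equation
  have hder : ∀ c : ℂ, derivative (g c) = derivative f := by
    intro c; simp [hg]
  have hkey : ∀ c : ℂ, (g c).roots.toFinset.card
      + ∑ z ∈ (g c).roots.toFinset, (derivative f).roots.count z = n := by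
    intro c
    have h1 : ∑ z ∈ (g c).roots.toFinset, (g c).roots.count z = n := by
      rw [Multiset.toFinset_sum_count_eq]
      exact (splits_iff_card_roots.1 (IsAlgClosed.splits (g c))).trans (hgdeg c)
    rw [← h1]
    rw [Finset.card_eq_sum_ones, ← Finset.sum_add_distrib]
    apply Finset.sum_congr rfl
    intro z hz
    rw [Multiset.mem_toFinset, mem_roots (hgne c)] at hz
    rw [count_roots, count_roots, ← hder c, derivative_rootMultiplicity_of_root hz]
    have : 1 ≤ (g c).rootMultiplicity z := (rootMultiplicity_pos (hgne c)).2 hz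
    omega
  -- sum of deficiencies bounded
  have hsum : ∑ c ∈ K, ∑ z ∈ (g c).roots.toFinset, (derivative f).roots.count z
      = ∑ z ∈ T, (derivative f).roots.count z := (Finset.sum_biUnion hdisj).symm
  have hbound : ∑ z ∈ T, (derivative f).roots.count z ≤ n - 1 := by
    have h1 : ∑ z ∈ T, (derivative f).roots.count z
        ≤ Multiset.card (derivative f).roots := by
      calc ∑ z ∈ T, (derivative f).roots.count z
          = ∑ z ∈ T ∩ (derivative f).roots.toFinset, (derivative f).roots.count z := by
            refine (Finset.sum_subset (Finset.inter_subset_left) ?_).symm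
            intro x hx hnx
            rw [Multiset.count_eq_zero]
            intro hmem
            exact hnx (Finset.mem_inter.2 ⟨hx, Multiset.mem_toFinset.2 hmem⟩)
        _ ≤ ∑ z ∈ (derivative f).roots.toFinset, (derivative f).roots.count z :=
            Finset.sum_le_sum_of_subset (Finset.inter_subset_right)
        _ = Multiset.card (derivative f).roots := Multiset.toFinset_sum_count_eq _
    have h2 : Multiset.card (derivative f).roots ≤ (derivative f).natDegree :=
      card_roots' _
    have h3 : (derivative f).natDegree < n := natDegree_derivative_lt (by
      intro h; rw [hn, h] at hf; omega)
    omega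
  -- assemble
  have htotal : T.card + ∑ z ∈ T, (derivative f).roots.count z = K.card * n := by
    rw [hcard, ← hsum, ← Finset.sum_add_distrib]
    rw [Finset.sum_congr rfl (fun c _ => hkey c)]
    simp [Finset.sum_const, mul_comm]
  have hk : 1 ≤ K.card := Finset.card_pos.2 hK
  have hkn : K.card * n = (K.card - 1) * n + n := by
    conv_lhs => rw [← Nat.sub_add_cancel hk]
    ring
  have : n * (K.card - 1) = (K.card - 1) * n := mul_comm _ _
  omega
end

section
/- The preimage of the real segment [−1,1] under the Chebyshev polynomial T_n (normalized so that T_n(cos θ) = cos(nθ)) is again the segment [−1,1], viewed as a subset of ℂ. -/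
/-!
Write `z = cos u`. Then `T n (cos u) = cos (n u)`, and `cos w` lies in `[-1, 1]` exactly when `w`
is real, since `cos (a + b i) = cos a cosh b - i sin a sinh b` and `cosh b > 1` for `b ≠ 0`.
Hence both `T n z ∈ [-1, 1]` and `z ∈ [-1, 1]` say that `u` is real.
-/

open Complex Set

theorem Complex.cos_mem_ofReal_Icc_iff {w : ℂ} :
    cos w ∈ ofReal '' Icc (-1) 1 ↔ w.im = 0 := by
  constructor
  · rintro ⟨x, hx, hcos⟩
    rw [cos_eq, ← ofReal_cos, ← ofReal_cosh, ← ofReal_sin, ← ofReal_sinh] at hcos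
    have him : Real.sin w.re * Real.sinh w.im = 0 := by
      have := congrArg im hcos
      simp only [sub_im, mul_im, mul_re, ofReal_re, ofReal_im, I_re, I_im] at this
      linarith
    have hre : Real.cos w.re * Real.cosh w.im = x := by
      have := congrArg re hcos
      simp only [sub_re, mul_re, mul_im, ofReal_re, ofReal_im, I_re, I_im] at this
      linarith
    rcases mul_eq_zero.mp him with hsin | hsinh
    · -- `sin w.re = 0` forces `cos w.re ^ 2 = 1`, hence `cosh w.im ^ 2 = x ^ 2 ≤ 1`.
      have hcos_sq : Real.cos w.re ^ 2 = 1 := by nlinarith [Real.sin_sq_add_cos_sq w.re]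
      have hcosh_sq : Real.cosh w.im ^ 2 ≤ 1 := by
        have : Real.cosh w.im ^ 2 = x ^ 2 := by rw [← hre, mul_pow, hcos_sq, one_mul]
        nlinarith [hx.1, hx.2]
      by_contra hne
      nlinarith [Real.one_lt_cosh.mpr hne]
    · exact Real.sinh_eq_zero.mp hsinh
  · intro him
    refine ⟨Real.cos w.re, ⟨Real.neg_one_le_cos _, Real.cos_le_one _⟩, ?_⟩
    rw [ofReal_cos]
    congr
    exact Complex.ext rfl him.symm

theorem stmt_3 (n : ℕ) (hn : 1 ≤ n) :
    (Polynomial.Chebyshev.T ℂ n).eval ⁻¹' (Complex.ofReal '' Set.Icc (-1) 1) =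
      Complex.ofReal '' Set.Icc (-1) 1 := by
  ext z
  obtain ⟨u, rfl⟩ := cos_surjective z
  have hT := Polynomial.Chebyshev.T_complex_cos u n
  push_cast at hT
  rw [mem_preimage, hT, cos_mem_ofReal_Icc_iff, cos_mem_ofReal_Icc_iff]
  simp [mul_im, Nat.one_le_iff_ne_zero.mp hn]
end

section
/- Let P be a monic complex polynomial of degree n and let K = P⁻¹(R) for a compact set R ⊆ ℂ. For any polynomial Q, define Q_P(z) = (1/n)·∑ Q(y), the sum taken over the n roots y (with multiplicity) of P(y) = P(z). Then the sup of |φ(P(z)) − Q_P(z)| over K is at most the sup of |φ(P(z)) − Q(z)| over K, for any function φ continuous on R. -/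
/-! Since `φ ∘ P` is constant on the fibre of `P` through `z`, the error `φ (P z) - Q_P z` is the
average of `φ (P y) - Q y` over the `n` points `y` of that fibre, counted with multiplicity. The
fibre lies in `K`, so by the triangle inequality this average is bounded by the supremum over `K`,
which is finite because `K` is compact (polynomials of positive degree are proper maps). -/

open Polynomial

theorem Multiset.norm_sub_inv_card_mul_sum_le {α 𝕜 : Type*} [RCLike 𝕜] {M : Multiset α}
    (hM : M ≠ 0) (f : α → 𝕜) {a : 𝕜} {S : ℝ} (h : ∀ y ∈ M, ‖a - f y‖ ≤ S) :
    ‖a - (1 / (card M : 𝕜)) * (M.map f).sum‖ ≤ S := by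
  have hcard : (0 : ℝ) < card M := by exact_mod_cast card_pos.mpr hM
  calc ‖a - (1 / (card M : 𝕜)) * (M.map f).sum‖
      = ‖(1 / (card M : 𝕜)) * (M.map (a - f ·)).sum‖ := by
        rw [sum_map_sub, map_const', sum_replicate, nsmul_eq_mul, mul_sub,
          ← mul_assoc, one_div_mul_cancel (by exact_mod_cast hcard.ne'), one_mul]
    _ ≤ 1 / card M * (card M • S) := by
        rw [norm_mul, norm_div, norm_one, RCLike.norm_natCast]
        gcongr
        refine (norm_multiset_sum_le _).trans ?_
        rw [map_map]
        refine (sum_le_card_nsmul _ _ fun x hx => ?_).trans_eq (by rw [card_map])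
        obtain ⟨y, hy, rfl⟩ := mem_map.mp hx
        exact h y hy
    _ = S := by rw [nsmul_eq_mul]; field_simp

theorem stmt_5_general (P : Polynomial ℂ) (n : ℕ) (hn : P.natDegree = n)
    (hn1 : 1 ≤ n) (R : Set ℂ) (hR : IsCompact R)
    (K : Set ℂ) (hK : K = P.eval ⁻¹' R)
    (φ : ℂ → ℂ) (hφ : ContinuousOn φ R) (Q : Polynomial ℂ) :
    (⨆ z : K, ‖φ (P.eval (z : ℂ)) -
        (1 / (n : ℂ)) * (((P - C (P.eval (z : ℂ))).roots).map Q.eval).sum‖) ≤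
      ⨆ z : K, ‖φ (P.eval (z : ℂ)) - Q.eval (z : ℂ)‖ := by
  subst hK
  have hdeg : 0 < P.degree := natDegree_pos_iff_degree_pos.mp (hn ▸ hn1)
  have hK : IsCompact (P.eval ⁻¹' R) := (P.isProperMap_eval hdeg).isCompact_preimage hR
  have hcont : ContinuousOn (fun z => ‖φ (P.eval z) - Q.eval z‖) (P.eval ⁻¹' R) :=
    ((hφ.comp P.continuous.continuousOn fun _ hz => hz).sub Q.continuous.continuousOn).norm
  have hbdd :
      BddAbove (Set.range fun z : P.eval ⁻¹' R => ‖φ (P.eval (z : ℂ)) - Q.eval (z : ℂ)‖) := by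
    simpa only [Set.image_eq_range] using hK.bddAbove_image hcont
  refine Real.iSup_le (fun ⟨z, hz⟩ => ?_) (Real.iSup_nonneg fun _ => norm_nonneg _)
  have hcard : Multiset.card (P - C (P.eval z)).roots = n := by
    rw [IsAlgClosed.card_roots_eq_natDegree, natDegree_sub_C, hn]
  rw [← hcard]
  refine Multiset.norm_sub_inv_card_mul_sum_le (Multiset.card_pos.mp (hcard ▸ hn1)) _
    fun y hy => ?_
  have hyz : P.eval y = P.eval z := (mem_roots_sub_C hdeg).mp hy
  rw [← hyz]
  exact le_ciSup hbdd ⟨y, show P.eval y ∈ R from hyz ▸ hz⟩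

theorem stmt_5 (P : Polynomial ℂ) (hP : P.Monic) (n : ℕ) (hn : P.natDegree = n)
    (hn1 : 1 ≤ n) (R : Set ℂ) (hR : IsCompact R) (hRne : R.Nonempty)
    (K : Set ℂ) (hK : K = P.eval ⁻¹' R)
    (φ : ℂ → ℂ) (hφ : ContinuousOn φ R) (Q : Polynomial ℂ) :
    (⨆ z : K, ‖φ (P.eval (z : ℂ)) -
        (1 / (n : ℂ)) * (((P - C (P.eval (z : ℂ))).roots).map Q.eval).sum‖) ≤
      ⨆ z : K, ‖φ (P.eval (z : ℂ)) - Q.eval (z : ℂ)‖ :=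
  stmt_5_general P n hn hn1 R hR K hK φ hφ Q
end

section
/- Let P be a monic polynomial of degree n over ℂ. For each j with 0 ≤ j ≤ n − 1, the power sum ∑ y^j over the n roots y (with multiplicity) of P(Y) − P(z) = 0 is a constant independent of z. -/
/-!
Newton's identities express the power sums `∑ y ^ k`, `0 ≤ k ≤ n`, of an `n`-element multiset
through its elementary symmetric functions `e₁, …, e_k` (and its cardinality, for `k = 0`).
By Vieta, `e_i` of the roots of `P - C a` is `±(coeff of Y^(n-i))/(leading coefficient)`,
and for `i < n` neither coefficient involves the constant term, hence not on `a = P z`.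
-/

open Finset Polynomial

namespace Multiset

variable {R : Type*} [CommRing R]

theorem sum_map_pow_eq_mul_esymm_sub_sum (s : Multiset R) {k : ℕ} (hk : 0 < k) :
    (s.map (· ^ k)).sum = (-1) ^ (k + 1) * k * s.esymm k -
      ∑ a ∈ HasAntidiagonal.antidiagonal k with a.1 ∈ Set.Ioo 0 k,
        (-1) ^ a.1 * s.esymm a.1 * (s.map (· ^ a.2)).sum := by
  classical
  -- evaluate the identity in `MvPolynomial s R` at the tautological point `x ↦ (x : R)`
  have hpsum (i : ℕ) : MvPolynomial.aeval (fun x : s ↦ (x : R)) (MvPolynomial.psum s R i) =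
      (s.map (· ^ i)).sum := by
    simp only [MvPolynomial.psum, map_sum, map_pow, MvPolynomial.aeval_X]
    exact congrArg sum (map_univ s (· ^ i))
  have hesymm (i : ℕ) : MvPolynomial.aeval (fun x : s ↦ (x : R)) (MvPolynomial.esymm s R i) =
      s.esymm i := by
    rw [MvPolynomial.aeval_esymm_eq_multiset_esymm, map_univ_coe]
  have newton := congrArg (MvPolynomial.aeval fun x : s ↦ (x : R))
    (MvPolynomial.psum_eq_mul_esymm_sub_sum s R k hk)
  simpa only [hpsum, hesymm, map_sub, map_mul, map_pow, map_neg, map_one, map_natCast, map_sum]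
    using newton

theorem sum_map_pow_eq_of_esymm_eq {s t : Multiset R} (hcard : card s = card t) {k : ℕ}
    (hesymm : ∀ i ≤ k, s.esymm i = t.esymm i) :
    (s.map (· ^ k)).sum = (t.map (· ^ k)).sum := by
  induction k using Nat.strong_induction_on with
  | _ k ih =>
    rcases Nat.eq_zero_or_pos k with rfl | hk
    · simp [hcard]
    rw [sum_map_pow_eq_mul_esymm_sub_sum s hk, sum_map_pow_eq_mul_esymm_sub_sum t hk,
      hesymm k le_rfl]
    congr 1
    refine Finset.sum_congr rfl fun a ha ↦ ?_
    simp only [Finset.mem_filter, HasAntidiagonal.mem_antidiagonal, Set.mem_Ioo] at ha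
    rw [hesymm a.1 (by omega), ih a.2 (by omega) fun i hi ↦ hesymm i (by omega)]

end Multiset

namespace Polynomial

variable {R : Type*} [CommRing R] [IsDomain R]

theorem coeff_eq_leadingCoeff_mul_esymm_roots_sub_C {p : R[X]} {a : R}
    (hroots : Multiset.card (p - C a).roots = p.natDegree) {i : ℕ} (hi : i < p.natDegree) :
    p.coeff (p.natDegree - i) = p.leadingCoeff * (-1) ^ i * (p - C a).roots.esymm i := by
  have vieta := coeff_eq_esymm_roots_of_card (p := p - C a) (k := p.natDegree - i)
    (by rwa [natDegree_sub_C]) (by rw [natDegree_sub_C]; omega)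
  rwa [natDegree_sub_C, Nat.sub_sub_self hi.le, coeff_sub, coeff_C_of_ne_zero (by omega),
    sub_zero, leadingCoeff, natDegree_sub_C, coeff_sub, coeff_C_of_ne_zero (by omega),
    sub_zero] at vieta

theorem esymm_roots_sub_C_eq {p : R[X]} {a b : R}
    (ha : Multiset.card (p - C a).roots = p.natDegree)
    (hb : Multiset.card (p - C b).roots = p.natDegree) {i : ℕ} (hi : i < p.natDegree) :
    (p - C a).roots.esymm i = (p - C b).roots.esymm i := by
  have hp : p ≠ 0 := by rintro rfl; simp at hi
  refine mul_left_cancel₀ (a := p.leadingCoeff * (-1) ^ i)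
    (mul_ne_zero (leadingCoeff_ne_zero.mpr hp) (by simp)) ?_
  rw [← coeff_eq_leadingCoeff_mul_esymm_roots_sub_C ha hi,
    ← coeff_eq_leadingCoeff_mul_esymm_roots_sub_C hb hi]

end Polynomial

theorem stmt_6_general (P : Polynomial ℂ) (n : ℕ) (hn : P.natDegree = n)
    (j : ℕ) (hj : j < n) :
    ∃ c : ℂ, ∀ z : ℂ,
      (((P - Polynomial.C (P.eval z)).roots).map (fun y => y ^ j)).sum = c := by
  have hroots (a : ℂ) : Multiset.card (P - C a).roots = P.natDegree := by
    rw [IsAlgClosed.card_roots_eq_natDegree, natDegree_sub_C]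
  refine ⟨((P - C (P.eval 0)).roots.map (· ^ j)).sum, fun z ↦ ?_⟩
  refine Multiset.sum_map_pow_eq_of_esymm_eq (by rw [hroots, hroots]) fun i hi ↦ ?_
  exact esymm_roots_sub_C_eq (hroots _) (hroots _) (by omega)

theorem stmt_6 (P : Polynomial ℂ) (hP : P.Monic) (n : ℕ) (hn : P.natDegree = n)
    (hn1 : 1 ≤ n) (j : ℕ) (hj : j < n) :
    ∃ c : ℂ, ∀ z : ℂ,
      (((P - Polynomial.C (P.eval z)).roots).map (fun y => y ^ j)).sum = c :=
  stmt_6_general P n hn j hj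
end

section
/- Suppose complex polynomials f₁, f₂ commute: f₁ ∘ f₂ = f₂ ∘ f₁. Then the filled Julia set of f₁ is contained in the filled Julia set of f₂ and vice versa, hence they are equal (where the filled Julia set of f is the set of points with bounded forward orbit), provided both f₁ and f₂ have degree ≥ 2. -/
/-- The filled Julia set of a polynomial: points with bounded forward orbit. -/
def filledJulia (f : Polynomial ℂ) : Set ℂ :=
  {z : ℂ | Bornology.IsBounded (Set.range fun j : ℕ => (fun w => f.eval w)^[j] z)}

/-!
A polynomial `g` of degree at least two satisfies `‖g z‖ ≥ 2‖z‖` outside a large disc, so every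
orbit that leaves that disc escapes to infinity and `K_g` is bounded. If `f` commutes with `g`,
the `g`-orbit of `f z` is the image under `f` of the `g`-orbit of `z`, so `f` maps `K_g` into
itself; hence the `f`-orbit of a point of `K_g` stays in the bounded set `K_g`, i.e.
`K_g ⊆ K_f`. Exchanging the roles of `f` and `g` gives equality.
-/

open Bornology Filter Set Polynomial

theorem Function.Commute.isBounded_range_iterate_apply {X : Type*} [PseudoMetricSpace X]
    [ProperSpace X] {f g : X → X} (hf : Continuous f) (hfg : Function.Commute f g) {z : X}
    (hz : IsBounded (range fun n => g^[n] z)) : IsBounded (range fun n => g^[n] (f z)) := by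
  have horbit : (fun n => g^[n] (f z)) = f ∘ fun n => g^[n] z :=
    funext fun n => ((hfg.iterate_right n).eq z).symm
  rw [horbit, range_comp]
  exact (hz.isCompact_closure.image hf).isBounded.subset (image_mono subset_closure)

theorem isBounded_setOf_isBounded_range_iterate {E : Type*} [SeminormedAddCommGroup E]
    {g : E → E} {c : ℝ} (hc : 1 < c) (hg : ∀ᶠ z in cobounded E, c * ‖z‖ ≤ ‖g z‖) :
    IsBounded {z | IsBounded (range fun n => g^[n] z)} := by
  rw [← comap_norm_atTop, eventually_comap, eventually_atTop] at hg
  obtain ⟨R, hR⟩ := hg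
  refine (Metric.isBounded_closedBall (x := 0) (r := max R 1)).subset fun z hz => ?_
  rw [mem_closedBall_zero_iff]
  by_contra! hzR
  have hz1 : 1 < ‖z‖ := (le_max_right R 1).trans_lt hzR
  have hgrowth : ∀ n, c ^ n * ‖z‖ ≤ ‖g^[n] z‖ := by
    intro n
    induction n with
    | zero => simp
    | succ n ih =>
      have hcn : 1 ≤ c ^ n := one_le_pow₀ hc.le
      have hlarge : R ≤ ‖g^[n] z‖ := by
        nlinarith [le_max_left R 1]
      rw [Function.iterate_succ_apply', pow_succ]
      calc c ^ n * c * ‖z‖ = c * (c ^ n * ‖z‖) := by ring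
        _ ≤ c * ‖g^[n] z‖ := by gcongr
        _ ≤ ‖g (g^[n] z)‖ := hR _ hlarge _ rfl
  obtain ⟨C, hC⟩ := isBounded_iff_forall_norm_le.mp hz
  obtain ⟨n, hn⟩ := pow_unbounded_of_one_lt C hc
  have hbound : ‖g^[n] z‖ ≤ C := hC _ ⟨n, rfl⟩
  nlinarith [hgrowth n, pow_pos (zero_lt_one.trans hc) n]

theorem Polynomial.eventually_mul_norm_le_norm_eval {𝕜 : Type*} [NormedField 𝕜] (f : 𝕜[X])
    (hf : 2 ≤ f.natDegree) (c : ℝ) : ∀ᶠ z in cobounded 𝕜, c * ‖z‖ ≤ ‖f.eval z‖ := by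
  set a := ‖f.coeff 0‖
  have hdivX : 0 < f.divX.degree := by
    rw [← natDegree_pos_iff_degree_pos, natDegree_divX_eq_natDegree_tsub_one]
    omega
  have hlarge : ∀ᶠ z in cobounded 𝕜, c + a ≤ ‖f.divX.eval z‖ :=
    (f.divX.tendsto_norm_atTop hdivX tendsto_norm_cobounded_atTop).eventually_ge_atTop _
  have hnorm : ∀ᶠ z : 𝕜 in cobounded 𝕜, 1 ≤ ‖z‖ :=
    tendsto_norm_cobounded_atTop.eventually_ge_atTop 1
  filter_upwards [hlarge, hnorm] with z hz hz1
  have hsplit : f.eval z = f.divX.eval z * z + f.coeff 0 := by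
    conv_lhs => rw [← divX_mul_X_add f]
    simp
  have hlower : ‖f.divX.eval z‖ * ‖z‖ - a ≤ ‖f.eval z‖ := by
    rw [hsplit, ← norm_mul]
    linarith [norm_sub_le_norm_add (f.divX.eval z * z) (f.coeff 0),
      norm_sub_norm_le (f.divX.eval z * z) (-f.coeff 0), norm_neg (f.coeff 0)]
  nlinarith [norm_nonneg (f.coeff 0)]

theorem isBounded_filledJulia {f : ℂ[X]} (hf : 2 ≤ f.natDegree) : IsBounded (filledJulia f) :=
  isBounded_setOf_isBounded_range_iterate one_lt_two (f.eventually_mul_norm_le_norm_eval hf 2)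

theorem mapsTo_filledJulia_of_comp_comm {f g : ℂ[X]} (hcomm : f.comp g = g.comp f) :
    MapsTo (fun w => f.eval w) (filledJulia g) (filledJulia g) := fun _ hz =>
  Function.Commute.isBounded_range_iterate_apply f.continuous
    (fun z => by simpa [eval_comp] using congrArg (eval z) hcomm) hz

theorem filledJulia_subset_of_comp_comm {f g : ℂ[X]} (hg : 2 ≤ g.natDegree)
    (hcomm : f.comp g = g.comp f) : filledJulia g ⊆ filledJulia f := fun _ hz =>
  (isBounded_filledJulia hg).subset <|
    range_subset_iff.mpr fun n => (mapsTo_filledJulia_of_comp_comm hcomm).iterate n hz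

theorem stmt_8 (f₁ f₂ : Polynomial ℂ) (h₁ : 2 ≤ f₁.natDegree) (h₂ : 2 ≤ f₂.natDegree)
    (hcomm : f₁.comp f₂ = f₂.comp f₁) :
    filledJulia f₁ = filledJulia f₂ :=
  (filledJulia_subset_of_comp_comm h₁ hcomm.symm).antisymm
    (filledJulia_subset_of_comp_comm h₂ hcomm)
end

section
/- Let f₁(z) = z^{a₁}·R₁(z^d) and f₂(z) = z^{a₂}·R₂(z^d) be complex polynomials, and suppose f₁ ∘ f₂ = μ ∘ f₂ ∘ f₁ where μ(z) = ε·z with ε a primitive d-th root of unity. Define g₁(z) = z^{a₁}·R₁(z)^d and g₂(z) = z^{a₂}·R₂(z)^d. Then g₁ and g₂ commute: g₁ ∘ g₂ = g₂ ∘ g₁. -/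
open Polynomial

theorem stmt_9 (d : ℕ) (hd : 1 ≤ d) (ε : ℂ) (hε : IsPrimitiveRoot ε d)
    (a₁ a₂ : ℕ) (R₁ R₂ : Polynomial ℂ)
    (f₁ f₂ : Polynomial ℂ)
    (hf₁ : f₁ = X ^ a₁ * R₁.comp (X ^ d)) (hf₂ : f₂ = X ^ a₂ * R₂.comp (X ^ d))
    (hcomm : f₁.comp f₂ = C ε * f₂.comp f₁) :
    (X ^ a₁ * R₁ ^ d : Polynomial ℂ).comp (X ^ a₂ * R₂ ^ d) =
      (X ^ a₂ * R₂ ^ d : Polynomial ℂ).comp (X ^ a₁ * R₁ ^ d) := by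
  have key : ∀ (a : ℕ) (R f : Polynomial ℂ), f = X ^ a * R.comp (X ^ d) →
      (X ^ a * R ^ d).comp (X ^ d) = f ^ d := by
    intro a R f hf
    subst hf
    simp only [mul_comp, pow_comp, X_comp, mul_pow, ← pow_mul, ← pow_mul'] ; ring
  have k1 := key a₁ R₁ f₁ hf₁
  have k2 := key a₂ R₂ f₂ hf₂
  apply expand_injective (R := ℂ) (Nat.lt_of_lt_of_le Nat.zero_lt_one hd)
  rw [expand_eq_comp_X_pow, expand_eq_comp_X_pow, comp_assoc, comp_assoc, k1, k2]
  have h1 : (X ^ a₁ * R₁ ^ d).comp (f₂ ^ d) = (f₁.comp f₂) ^ d := by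
    rw [show (f₂ : Polynomial ℂ) ^ d = (X ^ d).comp f₂ by simp [X_pow_comp],
      ← comp_assoc, k1, pow_comp]
  have h2 : (X ^ a₂ * R₂ ^ d).comp (f₁ ^ d) = (f₂.comp f₁) ^ d := by
    rw [show (f₁ : Polynomial ℂ) ^ d = (X ^ d).comp f₁ by simp [X_pow_comp],
      ← comp_assoc, k2, pow_comp]
  rw [h1, h2, hcomm, mul_pow, ← C_pow, hε.pow_eq_one, C_1, one_mul]
end

section
/- If a complex polynomial f of degree n satisfies f(εz) = α·f(z) + β for all z, where ε is a primitive b-th root of unity and α, β ∈ ℂ, then α = ε^a where a is the remainder of n modulo b, and there exists a polynomial R with f(z) = z^a·R(z^b) + f(0). -/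
/-!
Comparing the coefficients of `z ^ k` in `f (ε * z) = α * f z + β` gives `ε ^ k = α` for every
`k ≠ 0` with `f.coeff k ≠ 0`. For `k = n` this is `α = ε ^ n`, and since `ε` has order `b`, every
exponent `k ≠ 0` occurring in `f` is congruent to `n` modulo `b`. So `f - f 0` is a sum of monomials
`z ^ k` with `k % b = n % b`, i.e. `z ^ (n % b)` times a polynomial in `z ^ b`.
-/

open Polynomial

namespace Polynomial

variable {R : Type*}

theorem exists_eq_X_pow_mul_comp_X_pow_of_mod_eq [CommSemiring R] {p : R[X]} {a b : ℕ}
    (h : ∀ i ∈ p.support, i % b = a) : ∃ q : R[X], p = X ^ a * q.comp (X ^ b) := by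
  refine ⟨∑ i ∈ p.support, C (p.coeff i) * X ^ (i / b), ?_⟩
  simp only [sum_comp, mul_comp, C_comp, X_pow_comp, ← pow_mul, Finset.mul_sum]
  conv_lhs => rw [p.as_sum_support_C_mul_X_pow]
  refine Finset.sum_congr rfl fun i hi => ?_
  rw [← h i hi, mul_left_comm, ← pow_add, Nat.mod_add_div]

theorem pow_eq_of_eval_mul_eq [CommRing R] [IsDomain R] [Infinite R] {p : R[X]} {c α β : R}
    (h : ∀ z, p.eval (c * z) = α * p.eval z + β) {k : ℕ} (hk : k ≠ 0) (hpk : p.coeff k ≠ 0) :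
    c ^ k = α := by
  have hcomp : p.comp (C c * X) = C α * p + C β := Polynomial.funext fun z => by simp [h]
  have hcoeff := congrArg (coeff · k) hcomp
  simp only [comp_C_mul_X_coeff, coeff_add, coeff_C_mul, coeff_C, hk, if_false, add_zero] at hcoeff
  exact mul_left_cancel₀ hpk (by rw [hcoeff, mul_comm])

end Polynomial

theorem stmt_11 (f : Polynomial ℂ) (n : ℕ) (hn : f.natDegree = n) (hn1 : 1 ≤ n)
    (b : ℕ) (hb : 1 ≤ b) (ε : ℂ) (hε : IsPrimitiveRoot ε b) (α β : ℂ)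
    (h : ∀ z : ℂ, f.eval (ε * z) = α * f.eval z + β) :
    α = ε ^ (n % b) ∧
      ∃ R : Polynomial ℂ,
        f = X ^ (n % b) * R.comp (X ^ b) + C (f.eval 0) := by
  have hpow_inj : ∀ {i j : ℕ}, ε ^ i = ε ^ j ↔ i % b = j % b := by
    rw [hε.eq_orderOf]; exact (hε.isOfFinOrder (by omega)).pow_inj_mod
  have hαn : ε ^ n = α := by
    have hf : f ≠ 0 := ne_zero_of_natDegree_gt (n := 0) (by omega)
    exact pow_eq_of_eval_mul_eq h (by omega) (hn ▸ leadingCoeff_ne_zero.mpr hf)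
  have hα : α = ε ^ (n % b) := by rw [← hαn, hpow_inj, Nat.mod_mod]
  refine ⟨hα, ?_⟩
  obtain ⟨R, hR⟩ : ∃ R : ℂ[X], f - C (f.eval 0) = X ^ (n % b) * R.comp (X ^ b) := by
    refine exists_eq_X_pow_mul_comp_X_pow_of_mod_eq fun i hi => hpow_inj.mp ?_
    have hi0 : i ≠ 0 := by
      rintro rfl
      simp [coeff_zero_eq_eval_zero] at hi
    rw [mem_support_iff, coeff_sub, coeff_C, if_neg hi0, sub_zero] at hi
    rw [hαn, pow_eq_of_eval_mul_eq h hi0 hi]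
  exact ⟨R, by rw [← hR, sub_add_cancel]⟩
end
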